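/- For every d̄ ≥ 1 there exists n₀ ∈ ℕ such that the following holds for every n ≥ n₀. Let D be a feasible degree sequence on V = [n] with Σ^D ≤ d̄n, set S₂ := {u ∈ V : d(u) ≥ n^{1/3}} and S₃ := {u ∈ V : d(u) ≥ n^{4/5}}, and assume |S₃| ≥ 100. Then the probability that there exists a vertex u ∈ S₂∖S₃ that is not adjacent in G^D to any vertex of S₃ is at most 1/n. -/

import Mathlib

open Finset

noncomputable section
open scoped Classical

/-- The finset of all simple graphs on `Fin n` realising the degree sequence `D`
(vertex `v` has degree `D v`). -/
def graphsWithDegreeSeq (n : ℕ) (D : Fin n → ℕ) : Finset (SimpleGraph (Fin n)) :=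
  Finset.univ.filter (fun G => ∀ v, G.degree v = D v)

/-- Probability of `A` under the uniform distribution on simple graphs with degree
sequence `D`. -/
def uniformProb (n : ℕ) (D : Fin n → ℕ) (A : SimpleGraph (Fin n) → Prop) : ℝ :=
  (((graphsWithDegreeSeq n D).filter A).card : ℝ) / ((graphsWithDegreeSeq n D).card : ℝ)

/-!
Fix `u` with `a ≤ d(u) < b`, where `a = n^{1/3}`, `b = n^{4/5}`, and let `M_k` be the set of graphs
in which `u` has exactly `k` neighbours in `S = S₃`. A switching removes edges `uw, vx` and adds
`uv, wx`, with `v ∈ S` and `w ∉ S`; it preserves all degrees and maps `M_k` into `M_{k+1}`.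
For `k < 20` a graph of `M_k` admits at least `5ab` switchings: at least `80` choices of `v`,
`a/2` of `w`, and for each pair most low-degree neighbours `x` of `v` (few vertices have degree
above `L = 2d̄ n^{1/5}`, and these `x` have few neighbours among the `w`). Conversely a graph of
`M_{k+1}` arises from at most `20 Σ^D` of them, since `v` is one of its `k + 1 ≤ 20` neighbours
of `u` in `S` and `(w, x)` is an ordered edge. Hence `|M_0| ≤ (4d̄ n^{-2/15})^{20} |Ω|`, and a union
bound over `u` gives probability `O(n^{1-8/3}) ≤ 1/n`. Writing `t = n^{1/15}` makes every exponent
integral: `a = t^5`, `b = t^12`, `n = t^15`.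
-/

open scoped symmDiff

theorem Finset.card_nsmul_le_card_nsmul_of_injective {R α β γ : Type*} [Semiring R]
    [PartialOrder R] [IsOrderedRing R] {s : Finset α} {t : Finset β}
    {F : α → Finset γ} {B : β → Finset γ} {m n : R} (f : α → γ → β)
    (hf : ∀ c, Function.Injective (f · c))
    (hmaps : ∀ a ∈ s, ∀ c ∈ F a, f a c ∈ t ∧ c ∈ B (f a c))
    (hm : ∀ a ∈ s, m ≤ #(F a)) (hn : ∀ b ∈ t, #(B b) ≤ n) : #s • m ≤ #t • n := by
  have hinj : #(s.sigma F) ≤ #(t.sigma B) := by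
    refine card_le_card_of_injOn (fun p => ⟨f p.1 p.2, p.2⟩) ?_ ?_
    · rintro ⟨a, c⟩ hac
      simp only [coe_sigma, Set.mem_sigma_iff, mem_coe] at hac ⊢
      exact hmaps a hac.1 c hac.2
    · rintro ⟨a₁, c₁⟩ - ⟨a₂, c₂⟩ - h
      simp only [Sigma.mk.injEq, heq_eq_eq] at h
      obtain ⟨h, rfl⟩ := h
      rw [hf c₁ h]
  calc #s • m ≤ ∑ a ∈ s, (#(F a) : R) := card_nsmul_le_sum _ _ _ hm
    _ = #(s.sigma F) := by rw [card_sigma, Nat.cast_sum]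
    _ ≤ #(t.sigma B) := Nat.mono_cast hinj
    _ = ∑ b ∈ t, (#(B b) : R) := by rw [card_sigma, Nat.cast_sum]
    _ ≤ #t • n := sum_le_card_nsmul _ _ _ hn

theorem Finset.card_le_card_sdiff_insert_insert_add {α : Type*} [DecidableEq α]
    (A T : Finset α) (y z : α) : #A ≤ #(A \ insert y (insert z T)) + #(A ∩ T) + 2 := by
  have hsub : A ⊆ (A \ insert y (insert z T) ∪ A ∩ T) ∪ {y, z} := by
    intro q hq
    simp only [mem_union, mem_sdiff, mem_inter, mem_insert, mem_singleton]
    tauto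
  calc #A ≤ #((A \ insert y (insert z T) ∪ A ∩ T) ∪ {y, z}) := card_le_card hsub
    _ ≤ #(A \ insert y (insert z T) ∪ A ∩ T) + #({y, z} : Finset α) := card_union_le _ _
    _ ≤ #(A \ insert y (insert z T)) + #(A ∩ T) + 2 :=
      add_le_add (card_union_le _ _) card_le_two

theorem Finset.mul_card_filter_lt_le_sum {ι : Type*} (s : Finset ι) {f : ι → ℝ}
    (hf : ∀ i ∈ s, 0 ≤ f i) (L : ℝ) : L * #{i ∈ s | L < f i} ≤ ∑ i ∈ s, f i := by
  calc L * #{i ∈ s | L < f i} = ∑ i ∈ s with L < f i, L := by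
        rw [sum_const, nsmul_eq_mul, mul_comm]
    _ ≤ ∑ i ∈ s with L < f i, f i := sum_le_sum fun i hi => (mem_filter.1 hi).2.le
    _ ≤ ∑ i ∈ s, f i := sum_le_sum_of_subset_of_nonneg (filter_subset _ _) fun i hi _ => hf i hi

theorem pow_mul_le_pow_mul_of_mul_le_mul_succ {R : Type*} [CommSemiring R] [PartialOrder R]
    [IsOrderedRing R] {α β : R} {f : ℕ → R} {K : ℕ} (hα : 0 ≤ α) (hβ : 0 ≤ β)
    (hf : ∀ k < K, α * f k ≤ β * f (k + 1)) : α ^ K * f 0 ≤ β ^ K * f K := by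
  induction K with
  | zero => simp
  | succ K ih =>
    calc α ^ (K + 1) * f 0 = α * (α ^ K * f 0) := by ring
      _ ≤ α * (β ^ K * f K) := mul_le_mul_of_nonneg_left (ih fun k hk => hf k (by omega)) hα
      _ = β ^ K * (α * f K) := by ring
      _ ≤ β ^ K * (β * f (K + 1)) := mul_le_mul_of_nonneg_left (hf K (by omega)) (pow_nonneg hβ K)
      _ = β ^ (K + 1) * f (K + 1) := by ring

namespace SimpleGraph

variable {V : Type*} {G : SimpleGraph V} {u v w x : V}

structure IsSwitchable (G : SimpleGraph V) (u v w x : V) : Prop where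
  adj_uw : G.Adj u w
  adj_vx : G.Adj v x
  not_adj_uv : ¬ G.Adj u v
  not_adj_wx : ¬ G.Adj w x
  ne_uv : u ≠ v
  ne_wx : w ≠ x
  ne_ux : u ≠ x

/-- When `G.IsSwitchable u v w x`, this replaces the edges `uw, vx` of `G` by `uv, wx`. -/
def switch (G : SimpleGraph V) (u v w x : V) : SimpleGraph V :=
  G ∆ fromEdgeSet {s(u, w), s(v, x), s(u, v), s(w, x)}

theorem switch_injective (u v w x : V) :
    Function.Injective fun G : SimpleGraph V => G.switch u v w x :=
  symmDiff_left_injective _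

namespace IsSwitchable

theorem ne_vw (h : G.IsSwitchable u v w x) : v ≠ w :=
  fun hvw => h.not_adj_uv (hvw ▸ h.adj_uw)

theorem swap_pairs (h : G.IsSwitchable u v w x) : G.IsSwitchable w x u v :=
  ⟨h.adj_uw.symm, h.adj_vx.symm, h.not_adj_wx, h.not_adj_uv, h.ne_wx, h.ne_uv, h.ne_vw.symm⟩

theorem swap_ends (h : G.IsSwitchable u v w x) : G.IsSwitchable v u x w :=
  ⟨h.adj_vx, h.adj_uw, fun h' => h.not_adj_uv h'.symm, fun h' => h.not_adj_wx h'.symm,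
    h.ne_uv.symm, h.ne_wx.symm, h.ne_vw⟩

end IsSwitchable

theorem switch_swap_pairs (G : SimpleGraph V) (u v w x : V) :
    G.switch w x u v = G.switch u v w x := by
  simp only [switch, Sym2.eq_swap (a := w) (b := u), Sym2.eq_swap (a := x) (b := v)]
  congr 2
  grind

theorem switch_swap_ends (G : SimpleGraph V) (u v w x : V) :
    G.switch v u x w = G.switch u v w x := by
  simp only [switch, Sym2.eq_swap (a := v) (b := u), Sym2.eq_swap (a := x) (b := w)]
  congr 2
  grind

theorem switch_adj_left (h : G.IsSwitchable u v w x) (q : V) :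
    (G.switch u v w x).Adj u q ↔ q = v ∨ (G.Adj u q ∧ q ≠ w) := by
  simp only [switch, symmDiff_def, sup_adj, sdiff_adj, fromEdgeSet_adj, Set.mem_insert_iff,
    Set.mem_singleton_iff, Sym2.eq_iff]
  grind [h.adj_uw, h.not_adj_uv, h.ne_uv, h.ne_ux, h.ne_wx, h.ne_vw, G.ne_of_adj]

theorem switch_adj_of_notMem {p : V} (hp : p ∉ ({u, v, w, x} : Set V)) (q : V) :
    (G.switch u v w x).Adj p q ↔ G.Adj p q := by
  simp only [Set.mem_insert_iff, Set.mem_singleton_iff, not_or] at hp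
  simp only [switch, symmDiff_def, sup_adj, sdiff_adj, fromEdgeSet_adj, Set.mem_insert_iff,
    Set.mem_singleton_iff, Sym2.eq_iff]
  grind

variable [Fintype V] [DecidableEq V]

theorem neighborFinset_switch_left (h : G.IsSwitchable u v w x) :
    (G.switch u v w x).neighborFinset u = insert v ((G.neighborFinset u).erase w) := by
  ext q
  simp [switch_adj_left h, and_comm]

theorem degree_switch_left (h : G.IsSwitchable u v w x) :
    (G.switch u v w x).degree u = G.degree u := by
  rw [← card_neighborFinset_eq_degree, ← card_neighborFinset_eq_degree,
    neighborFinset_switch_left h, card_insert_of_notMem (by simp [h.not_adj_uv]),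
    card_erase_add_one (by simpa using h.adj_uw)]

theorem degree_switch (h : G.IsSwitchable u v w x) (p : V) :
    (G.switch u v w x).degree p = G.degree p := by
  by_cases hp : p ∈ ({u, v, w, x} : Set V)
  · simp only [Set.mem_insert_iff, Set.mem_singleton_iff] at hp
    rcases hp with rfl | rfl | rfl | rfl
    · exact degree_switch_left h
    · rw [← switch_swap_ends]; exact degree_switch_left h.swap_ends
    · rw [← switch_swap_pairs]; exact degree_switch_left h.swap_pairs
    · rw [← switch_swap_pairs, ← switch_swap_ends]; exact degree_switch_left h.swap_pairs.swap_ends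
  · rw [← card_neighborFinset_eq_degree, ← card_neighborFinset_eq_degree]
    congr 1
    ext q
    simp [switch_adj_of_notMem hp]

theorem sum_card_inter_neighborFinset_le (W A : Finset V) :
    ∑ w ∈ W, #(A ∩ G.neighborFinset w) ≤ ∑ x ∈ A, G.degree x := by
  calc ∑ w ∈ W, #(A ∩ G.neighborFinset w) = ∑ x ∈ A, #(W ∩ G.neighborFinset x) := by
        simp only [← filter_mem_eq_inter, card_filter]
        rw [sum_comm]
        simp only [mem_neighborFinset, adj_comm]
    _ ≤ ∑ x ∈ A, G.degree x :=
        sum_le_sum fun x _ =>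
          (card_le_card inter_subset_right).trans_eq (card_neighborFinset_eq_degree G x)

theorem card_mul_sub_sum_degree_le_sum_card_sdiff (W A : Finset V) (y : V) :
    (#W : ℝ) * (#A - 2) - ∑ x ∈ A, (G.degree x : ℝ)
      ≤ ∑ w ∈ W, (#(A \ insert y (insert w (G.neighborFinset w))) : ℝ) := by
  have hcodeg : (∑ w ∈ W, #(A ∩ G.neighborFinset w) : ℝ) ≤ ∑ x ∈ A, (G.degree x : ℝ) := by
    exact_mod_cast sum_card_inter_neighborFinset_le W A
  have hw : ∀ w ∈ W, (#A : ℝ) - 2 - #(A ∩ G.neighborFinset w)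
      ≤ #(A \ insert y (insert w (G.neighborFinset w))) := by
    intro w _
    have := card_le_card_sdiff_insert_insert_add A (G.neighborFinset w) y w
    have : (#A : ℝ) ≤ #(A \ insert y (insert w (G.neighborFinset w)))
        + #(A ∩ G.neighborFinset w) + 2 := by exact_mod_cast this
    linarith
  calc (#W : ℝ) * (#A - 2) - ∑ x ∈ A, (G.degree x : ℝ)
      ≤ (#W : ℝ) * (#A - 2) - ∑ w ∈ W, (#(A ∩ G.neighborFinset w) : ℝ) := by linarith
    _ = ∑ w ∈ W, ((#A : ℝ) - 2 - #(A ∩ G.neighborFinset w)) := by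
      rw [sum_sub_distrib, sum_const, nsmul_eq_mul]
    _ ≤ _ := sum_le_sum hw

variable (G) (S : Finset V) (u)

/-- Switchings `(v, w, x)` at `u` that trade the neighbour `w ∉ S` of `u` for a new neighbour
`v ∈ S`. -/
def forwardSwitchings : Finset (V × V × V) :=
  univ.filter fun t => t.1 ∈ S ∧ t.2.1 ∉ S ∧ G.IsSwitchable u t.1 t.2.1 t.2.2

/-- After a forward switching `(v, w, x)` of `G`, the triple is recovered from the switched graph as
a neighbour `v ∈ S` of `u` together with the ordered edge `(w, x)`. -/
def backwardSwitchings : Finset (V × V × V) :=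
  (G.neighborFinset u ∩ S) ×ˢ univ.filter fun e => G.Adj e.1 e.2

theorem card_backwardSwitchings :
    #(G.backwardSwitchings u S) = #(G.neighborFinset u ∩ S) * ∑ p, G.degree p := by
  rw [backwardSwitchings, card_product, card_filter, Fintype.sum_prod_type]
  congr 1
  refine sum_congr rfl fun p _ => ?_
  rw [← card_neighborFinset_eq_degree, neighborFinset_eq_filter, card_filter]

variable {G S u}

theorem neighborFinset_switch_inter (h : G.IsSwitchable u v w x) (hv : v ∈ S) (hw : w ∉ S) :
    (G.switch u v w x).neighborFinset u ∩ S = insert v (G.neighborFinset u ∩ S) := by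
  rw [neighborFinset_switch_left h]
  ext q
  simp only [mem_inter, mem_insert, mem_erase, mem_neighborFinset]
  grind

theorem card_neighborFinset_switch_inter (h : G.IsSwitchable u v w x) (hv : v ∈ S)
    (hw : w ∉ S) :
    #((G.switch u v w x).neighborFinset u ∩ S) = #(G.neighborFinset u ∩ S) + 1 := by
  rw [neighborFinset_switch_inter h hv hw,
    card_insert_of_notMem (by simp [h.not_adj_uv])]

theorem mem_backwardSwitchings_switch (h : G.IsSwitchable u v w x) (hv : v ∈ S) :
    (v, w, x) ∈ (G.switch u v w x).backwardSwitchings u S := by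
  have hwx := (switch_adj_left h.swap_pairs x).2 (Or.inl rfl)
  rw [switch_swap_pairs] at hwx
  simp [backwardSwitchings, switch_adj_left h, hv, hwx]

theorem sum_sum_card_le_card_forwardSwitchings (T : Finset V) (hu : u ∉ S) :
    ∑ v ∈ S \ G.neighborFinset u, ∑ w ∈ G.neighborFinset u \ S,
        #((G.neighborFinset v ∩ T) \ insert u (insert w (G.neighborFinset w)))
      ≤ #(G.forwardSwitchings u S) := by
  simp only [← card_sigma]
  refine card_le_card_of_injOn (fun p => (p.1, p.2.1, p.2.2)) ?_ ?_
  · rintro ⟨v, w, x⟩ h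
    simp only [coe_sigma, Set.mem_sigma_iff, mem_coe, mem_sdiff, mem_inter, mem_insert,
      mem_neighborFinset, not_or] at h
    obtain ⟨⟨hvS, huv⟩, ⟨huw, hwS⟩, ⟨hvx, -⟩, hxu, hxw, hwx⟩ := h
    simp only [forwardSwitchings, mem_coe, mem_filter, mem_univ, true_and]
    exact ⟨hvS, hwS, huw, hvx, huv, hwx, fun h => hu (h ▸ hvS), Ne.symm hxw, Ne.symm hxu⟩
  · rintro ⟨v, w, x⟩ - ⟨v', w', x'⟩ - h
    simp only [Prod.mk.injEq] at h
    obtain ⟨rfl, rfl, rfl⟩ := h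
    rfl

theorem mul_div_le_sum_card_sdiff {a b L : ℝ} (W : Finset V) (y : V) (hv : b ≤ G.degree v)
    (ha : 0 ≤ a) (hb : 8 ≤ b) (hLa : L ≤ a / 16) (hW : a / 2 ≤ #W)
    (hHigh : (#{y | L < (G.degree y : ℝ)} : ℝ) ≤ b / 2) :
    a * b / 16 ≤ ∑ w ∈ W, (#((G.neighborFinset v ∩ ({x | (G.degree x : ℝ) ≤ L} : Finset V)) \
      insert y (insert w (G.neighborFinset w))) : ℝ) := by
  set T : Finset V := {x | (G.degree x : ℝ) ≤ L}
  set A := G.neighborFinset v ∩ T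
  have hA : b / 2 ≤ #A := by
    have h := card_inter_add_card_sdiff (G.neighborFinset v) T
    rw [card_neighborFinset_eq_degree] at h
    have : (#A : ℝ) + #(G.neighborFinset v \ T) = G.degree v := by exact_mod_cast h
    have : (#(G.neighborFinset v \ T) : ℝ) ≤ #{y | L < (G.degree y : ℝ)} := by
      refine Nat.mono_cast (card_le_card fun y hy => ?_)
      simp only [T, mem_sdiff, mem_filter, mem_univ, true_and, not_le] at hy ⊢
      exact hy.2
    linarith
  have hdeg : ∑ x ∈ A, (G.degree x : ℝ) ≤ #A * L := by
    rw [← nsmul_eq_mul]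
    exact sum_le_card_nsmul _ _ _ fun x hx => (mem_filter.1 (mem_inter.1 hx).2).2
  have := card_mul_sub_sum_degree_le_sum_card_sdiff (G := G) W A y
  nlinarith

theorem mul_le_card_forwardSwitchings {a b L : ℝ} (hS : ∀ v ∈ S, b ≤ G.degree v)
    (hS100 : 100 ≤ #S) (hu : u ∉ S) (hk : #(G.neighborFinset u ∩ S) ≤ 19)
    (hua : a ≤ G.degree u) (ha : 40 ≤ a) (hb : 8 ≤ b) (hLa : L ≤ a / 16)
    (hHigh : (#{y | L < (G.degree y : ℝ)} : ℝ) ≤ b / 2) :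
    5 * a * b ≤ #(G.forwardSwitchings u S) := by
  have hk' : (#(G.neighborFinset u ∩ S) : ℝ) ≤ 19 := by exact_mod_cast hk
  have hW : a / 2 ≤ #(G.neighborFinset u \ S) := by
    have h := card_sdiff_add_card_inter (G.neighborFinset u) S
    rw [card_neighborFinset_eq_degree] at h
    have : (#(G.neighborFinset u \ S) : ℝ) + #(G.neighborFinset u ∩ S) = G.degree u := by
      exact_mod_cast h
    linarith
  have hV : (80 : ℝ) ≤ #(S \ G.neighborFinset u) := by
    have h := card_sdiff_add_card_inter S (G.neighborFinset u)
    rw [inter_comm] at h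
    have : (#(S \ G.neighborFinset u) : ℝ) + #(G.neighborFinset u ∩ S) = #S := by
      exact_mod_cast h
    have : (100 : ℝ) ≤ #S := by exact_mod_cast hS100
    linarith
  have hab : 0 ≤ a * b / 16 := by nlinarith
  calc 5 * a * b = 80 * (a * b / 16) := by ring
    _ ≤ #(S \ G.neighborFinset u) * (a * b / 16) := mul_le_mul_of_nonneg_right hV hab
    _ ≤ ∑ v ∈ S \ G.neighborFinset u, ∑ w ∈ G.neighborFinset u \ S,
        (#((G.neighborFinset v ∩ ({x | (G.degree x : ℝ) ≤ L} : Finset V)) \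
          insert u (insert w (G.neighborFinset w))) : ℝ) := by
      rw [← nsmul_eq_mul]
      refine card_nsmul_le_sum _ _ _ fun v hv => ?_
      exact mul_div_le_sum_card_sdiff _ u (hS v (mem_sdiff.1 hv).1) (by linarith) hb hLa hW hHigh
    _ ≤ #(G.forwardSwitchings u S) := by
      exact_mod_cast sum_sum_card_le_card_forwardSwitchings _ hu

end SimpleGraph

section DegreeSequence

open SimpleGraph

variable {n : ℕ} {D : Fin n → ℕ} {S : Finset (Fin n)} {u : Fin n} {a b L : ℝ}

def graphsWithAdjCount (n : ℕ) (D : Fin n → ℕ) (S : Finset (Fin n)) (u : Fin n) (k : ℕ) :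
    Finset (SimpleGraph (Fin n)) :=
  (graphsWithDegreeSeq n D).filter fun G => #(G.neighborFinset u ∩ S) = k

theorem mul_card_graphsWithAdjCount_le (hS : ∀ v ∈ S, b ≤ D v) (hS100 : 100 ≤ #S) (hu : u ∉ S)
    (hua : a ≤ D u) (ha : 40 ≤ a) (hb : 8 ≤ b) (hLa : L ≤ a / 16)
    (hHigh : (#{y | L < (D y : ℝ)} : ℝ) ≤ b / 2) {k : ℕ} (hk : k ≤ 19) :
    5 * a * b * #(graphsWithAdjCount n D S u k)
      ≤ 20 * (∑ i, (D i : ℝ)) * #(graphsWithAdjCount n D S u (k + 1)) := by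
  rw [mul_comm, mul_comm (20 * _), ← nsmul_eq_mul, ← nsmul_eq_mul]
  refine card_nsmul_le_card_nsmul_of_injective
    (F := fun G : SimpleGraph (Fin n) => G.forwardSwitchings u S)
    (B := fun G : SimpleGraph (Fin n) => G.backwardSwitchings u S)
    (fun G t => G.switch u t.1 t.2.1 t.2.2) (fun t => switch_injective _ _ _ _) ?maps ?forward
    ?backward
  case maps =>
    intro G hG t ht
    simp only [graphsWithAdjCount, graphsWithDegreeSeq, mem_filter, mem_univ, true_and] at hG ⊢
    simp only [forwardSwitchings, mem_filter, mem_univ, true_and] at ht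
    obtain ⟨hvS, hwS, hsw⟩ := ht
    refine ⟨⟨fun p => (degree_switch hsw p).trans (hG.1 p), ?_⟩,
      mem_backwardSwitchings_switch hsw hvS⟩
    rw [card_neighborFinset_switch_inter hsw hvS hwS, hG.2]
  case forward =>
    intro G hG
    simp only [graphsWithAdjCount, graphsWithDegreeSeq, mem_filter, mem_univ, true_and] at hG
    obtain ⟨hdeg, rfl⟩ := hG
    refine mul_le_card_forwardSwitchings (fun v hv => ?_) hS100 hu hk (by rwa [hdeg]) ha hb hLa
      (by simpa only [hdeg] using hHigh)
    rw [hdeg]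
    exact hS v hv
  case backward =>
    intro G hG
    simp only [graphsWithAdjCount, graphsWithDegreeSeq, mem_filter, mem_univ, true_and] at hG
    rw [card_backwardSwitchings, hG.2]
    simp only [hG.1, Nat.cast_mul, Nat.cast_sum, Nat.cast_add, Nat.cast_one]
    have : ((k : ℝ) + 1) ≤ 20 := by exact_mod_cast (by omega : k + 1 ≤ 20)
    exact mul_le_mul_of_nonneg_right this (by positivity)

theorem card_graphsWithAdjCount_zero_le (hS : ∀ v ∈ S, b ≤ D v) (hS100 : 100 ≤ #S)
    (hu : u ∉ S) (hua : a ≤ D u) (ha : 40 ≤ a) (hb : 8 ≤ b) (hLa : L ≤ a / 16)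
    (hHigh : (#{y | L < (D y : ℝ)} : ℝ) ≤ b / 2) :
    (5 * a * b) ^ 20 * #(graphsWithAdjCount n D S u 0)
      ≤ (20 * ∑ i, (D i : ℝ)) ^ 20 * #(graphsWithDegreeSeq n D) := by
  calc (5 * a * b) ^ 20 * #(graphsWithAdjCount n D S u 0)
      ≤ (20 * ∑ i, (D i : ℝ)) ^ 20 * #(graphsWithAdjCount n D S u 20) :=
        pow_mul_le_pow_mul_of_mul_le_mul_succ (f := fun k => (#(graphsWithAdjCount n D S u k) : ℝ))
          (by positivity) (by positivity)
          fun k hk => mul_card_graphsWithAdjCount_le hS hS100 hu hua ha hb hLa hHigh (by omega)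
    _ ≤ (20 * ∑ i, (D i : ℝ)) ^ 20 * #(graphsWithDegreeSeq n D) := by
      gcongr
      exact filter_subset _ _

theorem uniformProb_exists_isolated_le (hΩ : (graphsWithDegreeSeq n D).Nonempty)
    (hS100 : 100 ≤ #{v | b ≤ (D v : ℝ)}) (ha : 40 ≤ a) (hb : 8 ≤ b) (hL : 0 < L)
    (hLa : L ≤ a / 16) (hsum : 2 * ∑ i, (D i : ℝ) ≤ L * b) :
    uniformProb n D (fun G => ∃ u : Fin n, a ≤ (D u : ℝ) ∧ (D u : ℝ) < b ∧
        ∀ v : Fin n, b ≤ (D v : ℝ) → ¬ G.Adj u v)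
      ≤ n * (20 * (∑ i, (D i : ℝ)) / (5 * a * b)) ^ 20 := by
  set S : Finset (Fin n) := {v | b ≤ (D v : ℝ)}
  set U : Finset (Fin n) := {u | a ≤ (D u : ℝ) ∧ (D u : ℝ) < b}
  set r := 20 * (∑ i, (D i : ℝ)) / (5 * a * b)
  have hHigh : (#{y | L < (D y : ℝ)} : ℝ) ≤ b / 2 := by
    have := mul_card_filter_lt_le_sum univ (fun i _ => Nat.cast_nonneg (D i)) L
    exact le_of_mul_le_mul_left (by linarith) hL
  have hΩpos : (0 : ℝ) < #(graphsWithDegreeSeq n D) := by exact_mod_cast hΩ.card_pos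
  have hsub : ∀ G ∈ graphsWithDegreeSeq n D, (∃ u : Fin n, a ≤ (D u : ℝ) ∧ (D u : ℝ) < b ∧
      ∀ v : Fin n, b ≤ (D v : ℝ) → ¬ G.Adj u v) →
      G ∈ U.biUnion fun u => graphsWithAdjCount n D S u 0 := by
    rintro G hG ⟨u, hua, hub, hiso⟩
    refine mem_biUnion.2 ⟨u, by simp [U, hua, hub], mem_filter.2 ⟨hG, ?_⟩⟩
    rw [card_eq_zero, eq_empty_iff_forall_notMem]
    intro v hv
    simp only [S, mem_inter, mem_neighborFinset, mem_filter, mem_univ, true_and] at hv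
    exact hiso v hv.2 hv.1
  have hlayer : ∀ u ∈ U,
      (#(graphsWithAdjCount n D S u 0) : ℝ) ≤ r ^ 20 * #(graphsWithDegreeSeq n D) := by
    intro u hu
    simp only [U, mem_filter, mem_univ, true_and] at hu
    have := card_graphsWithAdjCount_zero_le (S := S) (fun v hv => (mem_filter.1 hv).2) hS100
      (by simp [S, hu.2]) hu.1 ha hb hLa hHigh
    have hab : 0 < 5 * a * b := by positivity
    rw [div_pow, div_mul_eq_mul_div, le_div_iff₀ (by positivity)]
    linarith
  rw [uniformProb, div_le_iff₀ hΩpos]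
  calc (_ : ℝ) ≤ ∑ u ∈ U, (#(graphsWithAdjCount n D S u 0) : ℝ) := by
        rw [← Nat.cast_sum]
        refine Nat.mono_cast ((card_le_card fun G hG => ?_).trans
          (card_biUnion_le (t := fun u => graphsWithAdjCount n D S u 0)))
        simp only [mem_filter] at hG
        exact hsub G hG.1 hG.2
    _ ≤ #U * (r ^ 20 * #(graphsWithDegreeSeq n D)) := by
        rw [← nsmul_eq_mul]
        exact sum_le_card_nsmul _ _ _ hlayer
    _ ≤ n * r ^ 20 * #(graphsWithDegreeSeq n D) := by
        rw [mul_assoc]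
        gcongr
        simpa using card_le_univ U

theorem uniformProb_exists_isolated_le_of_pow {dbar t : ℝ} (hdbar : 1 ≤ dbar)
    (ht : (32 * dbar) ^ 2 ≤ t) (hn : (n : ℝ) = t ^ 15) (hΩ : (graphsWithDegreeSeq n D).Nonempty)
    (hsum : ∑ i, (D i : ℝ) ≤ dbar * n) (hS100 : 100 ≤ #{v | t ^ 12 ≤ (D v : ℝ)}) :
    uniformProb n D (fun G => ∃ u : Fin n, t ^ 5 ≤ (D u : ℝ) ∧ (D u : ℝ) < t ^ 12 ∧
        ∀ v : Fin n, t ^ 12 ≤ (D v : ℝ) → ¬ G.Adj u v)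
      ≤ 1 / n := by
  rw [hn] at hsum
  have ht0 : 0 < t := lt_of_lt_of_le (by positivity) ht
  have ht40 : 40 ≤ t := le_trans (by nlinarith) ht
  have hdbar_t : 32 * dbar ≤ t ^ 2 := by nlinarith
  have hratio : 20 * (∑ i, (D i : ℝ)) / (5 * t ^ 5 * t ^ 12) ≤ 4 * dbar / t ^ 2 := by
    rw [div_le_div_iff₀ (by positivity) (by positivity)]
    nlinarith [pow_pos ht0 2]
  have hpow : (4 * dbar) ^ 20 ≤ t ^ 10 :=
    calc (4 * dbar) ^ 20 ≤ ((32 * dbar) ^ 2) ^ 10 := by rw [← pow_mul]; gcongr; linarith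
      _ ≤ t ^ 10 := by gcongr
  refine (uniformProb_exists_isolated_le (L := 2 * dbar * t ^ 3) hΩ hS100 ?_ ?_ (by positivity)
    ?_ ?_).trans ?_
  · exact ht40.trans (le_self_pow₀ (by linarith) (by norm_num))
  · exact (by linarith : (8 : ℝ) ≤ t).trans (le_self_pow₀ (by linarith) (by norm_num))
  · calc 2 * dbar * t ^ 3 = 32 * dbar * t ^ 3 / 16 := by ring
      _ ≤ t ^ 2 * t ^ 3 / 16 := by gcongr
      _ = t ^ 5 / 16 := by ring
  · linear_combination 2 * hsum
  · calc (n : ℝ) * (20 * (∑ i, (D i : ℝ)) / (5 * t ^ 5 * t ^ 12)) ^ 20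
        ≤ t ^ 15 * (4 * dbar / t ^ 2) ^ 20 := by rw [hn]; gcongr
      _ = (4 * dbar) ^ 20 / t ^ 25 := by field_simp
      _ ≤ t ^ 10 / t ^ 25 := by gcongr
      _ = 1 / n := by rw [hn]; field_simp

end DegreeSequence

/-- **Lemma (every vertex of `S₂ ∖ S₃` typically has a neighbour in `S₃`).**
Here `S₂ = {u : d(u) ≥ n^{1/3}}` and `S₃ = {u : d(u) ≥ n^{4/5}}`, and `|S₃| ≥ 100`. -/
theorem midrange_vertices_attached_to_S3 :
    ∀ dbar : ℝ, 1 ≤ dbar →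
    ∃ n₀ : ℕ, ∀ n : ℕ, n₀ ≤ n →
    ∀ D : Fin n → ℕ, (∀ w, 1 ≤ D w) →
    (graphsWithDegreeSeq n D).Nonempty →
    (∑ i, (D i : ℝ)) ≤ dbar * n →
    100 ≤ (Finset.univ.filter
        (fun u : Fin n => (n : ℝ) ^ ((4 : ℝ) / 5) ≤ (D u : ℝ))).card →
    uniformProb n D (fun G => ∃ u : Fin n,
        (n : ℝ) ^ ((1 : ℝ) / 3) ≤ (D u : ℝ) ∧ (D u : ℝ) < (n : ℝ) ^ ((4 : ℝ) / 5) ∧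
        ∀ v : Fin n, (n : ℝ) ^ ((4 : ℝ) / 5) ≤ (D v : ℝ) → ¬ G.Adj u v)
      ≤ 1 / n := by
  intro dbar hdbar
  refine ⟨⌈(32 * dbar) ^ 30⌉₊, fun n hn₀ D _ hΩ hsum hS3 => ?_⟩
  set t : ℝ := (n : ℝ) ^ ((1 : ℝ) / 15)
  have hpow (k : ℕ) : (n : ℝ) ^ ((k : ℝ) / 15) = t ^ k := by
    rw [← Real.rpow_natCast, ← Real.rpow_mul (Nat.cast_nonneg n)]
    ring_nf
  have hn : (n : ℝ) = t ^ 15 := by rw [← hpow 15]; norm_num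
  have ht : (32 * dbar) ^ 2 ≤ t := by
    refine le_of_pow_le_pow_left₀ (n := 15) (by norm_num) (by positivity) ?_
    rw [← hn, ← pow_mul]
    exact_mod_cast Nat.ceil_le.1 hn₀
  have h13 : (n : ℝ) ^ ((1 : ℝ) / 3) = t ^ 5 := by rw [← hpow 5]; norm_num
  have h45 : (n : ℝ) ^ ((4 : ℝ) / 5) = t ^ 12 := by rw [← hpow 12]; norm_num
  rw [h45] at hS3
  rw [h13, h45]
  exact uniformProb_exists_isolated_le_of_pow hdbar ht hn hΩ hsum hS3
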